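/- arXiv:2503.02864 — 2 statements merged into one kernel-verified Lean document; each statement's English description precedes it below -/
import Mathlib

section
/- Let π and ρ be permutations of a finite type. The cyclic group ⟨π⟩ contains a permutation with the same cycle type as ρ (i.e. there exists a natural number q with cycleType(π^q) = cycleType(ρ)) if and only if orderOf ρ divides orderOf π and π^(orderOf π / orderOf ρ) has the same cycle type as ρ. -/
/-!
If `n = orderOf π`, then `π ^ q` is a power of `π ^ gcd n q` with exponent coprime to the order
`n / gcd n q` of the latter, and coprime powers preserve the cycle type (each cycle of length `k`
is raised to a power coprime to `k`, hence stays a `k`-cycle). So the cycle types occurring in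
`⟨π⟩` are those of the `π ^ e` with `e ∣ n`, and `e` is recovered from the cycle type as
`n / orderOf (π ^ e)`, the order being the `lcm` of the cycle type.
-/

namespace Equiv.Perm

variable {α : Type*} [Fintype α] [DecidableEq α]

theorem cycleType_pow_of_coprime (σ : Perm α) {m : ℕ} (hm : m.Coprime (orderOf σ)) :
    (σ ^ m).cycleType = σ.cycleType := by
  induction σ using cycle_induction_on generalizing m with
  | base_one => simp
  | base_cycles σ hσ =>
    rw [(hσ.pow_iff.mpr hm).cycleType, hσ.cycleType, support_pow_coprime hm]
  | induction_disjoint σ τ hd _ hσ hτ =>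
    rw [hd.orderOf] at hm
    rw [hd.commute.mul_pow, (hd.pow_disjoint_pow m m).cycleType_mul, hd.cycleType_mul,
      hσ (hm.coprime_dvd_right (Nat.dvd_lcm_left _ _)),
      hτ (hm.coprime_dvd_right (Nat.dvd_lcm_right _ _))]

theorem cycleType_pow_eq_cycleType_pow_gcd (σ : Perm α) (q : ℕ) :
    (σ ^ q).cycleType = (σ ^ (orderOf σ).gcd q).cycleType := by
  set g := (orderOf σ).gcd q
  have hg : 0 < g := Nat.gcd_pos_of_pos_left q (orderOf_pos σ)
  have hcop : (q / g).Coprime (orderOf (σ ^ g)) := by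
    rw [orderOf_pow_of_dvd hg.ne' (Nat.gcd_dvd_left _ _)]
    exact (Nat.coprime_div_gcd_div_gcd hg).symm
  calc (σ ^ q).cycleType = ((σ ^ g) ^ (q / g)).cycleType := by
        rw [← pow_mul, Nat.mul_div_cancel' (Nat.gcd_dvd_right _ _)]
    _ = (σ ^ g).cycleType := cycleType_pow_of_coprime _ hcop

end Equiv.Perm

open Equiv.Perm in
/-- The cyclic group `⟨π⟩` contains a permutation with the same cycle type as `ρ` if and only
if `orderOf ρ` divides `orderOf π` and `π ^ (orderOf π / orderOf ρ)` has the same cycle type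
as `ρ`. -/
theorem exists_pow_cycleType_iff_dvd {α : Type*} [Fintype α] [DecidableEq α]
    (π ρ : Equiv.Perm α) :
    (∃ q : ℕ, (π ^ q).cycleType = ρ.cycleType) ↔
      orderOf ρ ∣ orderOf π ∧
        (π ^ (orderOf π / orderOf ρ)).cycleType = ρ.cycleType := by
  refine ⟨fun ⟨q, hq⟩ => ?_, fun h => ⟨_, h.2⟩⟩
  have hord : orderOf (π ^ q) = orderOf ρ := by
    rw [← lcm_cycleType, hq, lcm_cycleType]
  have hgcd : orderOf π / orderOf ρ = (orderOf π).gcd q := by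
    rw [← hord, orderOf_pow, Nat.div_div_self (Nat.gcd_dvd_left _ _) (orderOf_pos π).ne']
  refine ⟨hord ▸ orderOf_pow_dvd q, ?_⟩
  rw [hgcd, ← cycleType_pow_eq_cycleType_pow_gcd, hq]
end

section
/- With the exact-3-hitting-set construction of ρ, π_1, π_2 as described, suppose x_1, x_2 are natural numbers such that π_1^{x_1} π_2^{x_2} has the same cycle type as ρ. Then for every clause C_j = {i_1 < i_2 < i_3} there is a unique a ∈ [3] such that x_2 ≢ 0 mod p_{i_a} and x_2 ≡ 0 mod p_{i_b} for all b ∈ [3] ∖ {a}. -/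
/-! Exact-3-hitting-set construction.  The ground set is `Fin n`; the `j`-th clause is
`{idx j 0, idx j 1, idx j 2}` with `idx j` strictly monotone.  `p i` is the `(i+1)`-st prime
greater than `3` (zero-indexed, so `p 0 = 5`), `q n j` is the `(j+1)`-st of the `m` primes
following the first `2n` primes greater than `3`.  Every permutation group
`Sym(ℓ)`-component is realized on `Fin ℓ`, and the `ℓ`-cycle `([ℓ]) = (1,2,…,ℓ)` is realized
as `finRotate ℓ`.  Cycle types are computed in the symmetric group on the disjoint union of
all components (fixpoints are discarded by `Equiv.Perm.cycleType`, so the padding of the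
second block of components to degree `p_n^3 q_j` is immaterial). -/

namespace HittingSet

/-- `p i` is the `(i+1)`-st prime greater than 3 (zero-indexed): `p 0 = 5`. -/
noncomputable def p (i : ℕ) : ℕ := Nat.nth Nat.Prime (i + 2)

/-- `q n j` is the `(j+1)`-st prime following the first `2n` primes greater than 3. -/
noncomputable def q (n j : ℕ) : ℕ := Nat.nth Nat.Prime (2 * n + 2 + j)

/-- `r j = q_j ⬝ p_{i_1} p_{i_2} p_{i_3}` for the clause `C_j = {i_1 < i_2 < i_3}`. -/
noncomputable def r (n : ℕ) {m : ℕ} (idx : Fin m → Fin 3 → Fin n) (j : Fin m) : ℕ :=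
  q n j * (p (idx j 0) * p (idx j 1) * p (idx j 2))

/-- The underlying set of the permutation group
`G = ∏_{i=1}^n Sym(p_i p_{n+i}) × ∏_{j=1}^m Sym(r_j)^6` (embedded in a symmetric group). -/
abbrev Omega (n : ℕ) {m : ℕ} (idx : Fin m → Fin 3 → Fin n) : Type :=
  (Σ i : Fin n, Fin (p i * p (n + i))) ⊕ (Σ j : Fin m, Σ _d : Fin 6, Fin (r n idx j))

/-- `ρ = (ζ_1,…,ζ_n,η_1,…,η_m)` with `ζ_i = ([p_i p_{n+i}])` and
`η_j = (([r_j])^{p_{i_1}p_{i_2}p_{i_3}}, ([r_j])^{p_{i_1}}, ([r_j])^{p_{i_2}},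
([r_j])^{p_{i_3}}, ([r_j]), ([r_j]))`. -/
noncomputable def rho (n : ℕ) {m : ℕ} (idx : Fin m → Fin 3 → Fin n) : Equiv.Perm (Omega n idx) :=
  Equiv.sumCongr
    (Equiv.sigmaCongrRight fun _i => finRotate _)
    (Equiv.sigmaCongrRight fun j => Equiv.sigmaCongrRight fun d =>
      finRotate (r n idx j) ^
        (![p (idx j 0) * p (idx j 1) * p (idx j 2),
           p (idx j 0), p (idx j 1), p (idx j 2), 1, 1] d))

/-- `π_1 = (α_1,…,α_n,β_1,…,β_m)` with `α_i = ([p_i p_{n+i}])` and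
`β_j = (([r_j])^{s_{j,1}}, …, ([r_j])^{s_{j,6}})`. -/
noncomputable def pi1 (n : ℕ) {m : ℕ} (idx : Fin m → Fin 3 → Fin n) (s : Fin m → ℕ → ℕ) :
    Equiv.Perm (Omega n idx) :=
  Equiv.sumCongr
    (Equiv.sigmaCongrRight fun _i => finRotate _)
    (Equiv.sigmaCongrRight fun j => Equiv.sigmaCongrRight fun d =>
      finRotate (r n idx j) ^ s j d.val)

/-- `π_2 = (γ_1,…,γ_n,δ_1,…,δ_m)` with `γ_i = id` and
`δ_j = (([r_j])^{t_j}, …, ([r_j])^{t_j})`. -/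
noncomputable def pi2 (n : ℕ) {m : ℕ} (idx : Fin m → Fin 3 → Fin n) (t : Fin m → ℕ) :
    Equiv.Perm (Omega n idx) :=
  Equiv.sumCongr (Equiv.refl _)
    (Equiv.sigmaCongrRight fun j => Equiv.sigmaCongrRight fun _d =>
      finRotate (r n idx j) ^ t j)

/-!
Equal cycle types make `σ = π₁^{x₁} π₂^{x₂}` and `ρ` conjugate, so `σ^k` and `ρ^k` have equally
many fixed points for every `k`. Both are products of powers of the rotations `([ℓ])` of the
blocks, and `([ℓ])^e` fixes all `ℓ` points if `ℓ ∣ e` and none otherwise. Comparing `k` with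
`q_j k` isolates the six blocks of clause `j`, the only ones whose length `q_j P_j`
(`P_j = p_{i_1} p_{i_2} p_{i_3}`) is divisible by `q_j`: the exponents `e_d = s_{j,d} x₁ + t_j x₂`
of `σ` on them are prime to `q_j` and are divisible by the factors of `P_j` in the same pattern as
the exponents `(P_j, p_{i_1}, p_{i_2}, p_{i_3}, 1, 1)` of `ρ`, so each `p_{i_b}` divides exactly two
`e_d` and `P_j` divides one. Since `e_d ≡ x₂ - c_{b,d} x₁ (mod p_{i_b})` for the table
`c = coeff`, the first fact forces `x₁ ≢ 0` and `x₂ ≡ 0` or `x₁ (mod p_{i_b})`, and the second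
then forces the `d`-th column of `c` to be a unit vector `[b = a]`.
-/

end HittingSet

open Equiv Finset

namespace Equiv.Perm

variable {α : Type*} [Fintype α] [DecidableEq α]

lemma card_fixed_pow_eq_of_cycleType_eq {σ τ : Perm α} (h : σ.cycleType = τ.cycleType)
    (k : ℕ) : #{x | (σ ^ k) x = x} = #{x | (τ ^ k) x = x} := by
  have hsupp : #(σ ^ k).support = #(τ ^ k).support := by
    rw [← sum_cycleType, ← sum_cycleType,
      isConj_iff_cycleType_eq.1 ((isConj_iff_cycleType_eq.2 h).pow k)]
  have hσ := card_filter_add_card_filter_not (s := univ) fun x => (σ ^ k) x = x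
  have hτ := card_filter_add_card_filter_not (s := univ) fun x => (τ ^ k) x = x
  simp only [Perm.support, ne_eq] at hsupp
  omega

lemma card_fixed_sumCongr {β : Type*} [Fintype β] [DecidableEq β] (σ : Perm α) (τ : Perm β) :
    #{x | Equiv.sumCongr σ τ x = x} = #{x | σ x = x} + #{x | τ x = x} := by
  rw [card_filter, card_filter, card_filter, Fintype.sum_sum_type]
  simp

lemma card_fixed_sigmaCongrRight {β : α → Type*} [∀ a, Fintype (β a)] [∀ a, DecidableEq (β a)]
    (σ : ∀ a, Perm (β a)) :
    #{x | Equiv.sigmaCongrRight σ x = x} = ∑ a, #{x | σ a x = x} := by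
  rw [card_filter, Fintype.sum_sigma]
  refine sum_congr rfl fun a _ => ?_
  rw [card_filter]
  simp

end Equiv.Perm

open Fin.NatCast in
lemma finRotate_pow_apply {ℓ : ℕ} [NeZero ℓ] (e : ℕ) (v : Fin ℓ) :
    (finRotate ℓ ^ e) v = v + e := by
  induction e with
  | zero => simp
  | succ e ih => rw [pow_succ', Perm.mul_apply, ih, finRotate_apply, Nat.cast_succ, add_assoc]

lemma finRotate_pow_apply_eq_self_iff {ℓ : ℕ} (e : ℕ) (v : Fin ℓ) :
    (finRotate ℓ ^ e) v = v ↔ ℓ ∣ e := by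
  have : NeZero ℓ := ⟨fun h => (h ▸ v).elim0⟩
  rw [finRotate_pow_apply, add_eq_left, Fin.natCast_eq_zero]

lemma card_fixed_finRotate_pow (ℓ e : ℕ) :
    #{v | (finRotate ℓ ^ e) v = v} = if ℓ ∣ e then ℓ else 0 := by
  simp only [finRotate_pow_apply_eq_self_iff]
  split_ifs with h <;> simp [h]

namespace Nat

lemma mul_dvd_mul_iff_dvd_and_dvd_of_coprime {Q P e k : ℕ} (hQP : Coprime Q P)
    (hQk : Coprime Q k) : Q * P ∣ e * k ↔ Q ∣ e ∧ P ∣ e * k :=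
  ⟨fun h => ⟨hQk.dvd_of_dvd_mul_right (dvd_of_mul_right_dvd h), dvd_of_mul_left_dvd h⟩,
    fun ⟨hQ, hP⟩ => hQP.mul_dvd_of_dvd_of_dvd (hQ.mul_right k) hP⟩

lemma ite_mul_dvd_mul_mul {Q P e k : ℕ} (hQ : 0 < Q) (hQP : Coprime Q P) (hQk : Coprime Q k) :
    (if Q * P ∣ e * (Q * k) then Q * P else 0) =
      (if Q * P ∣ e * k then Q * P else 0) + if P ∣ e * k ∧ ¬ Q ∣ e then Q * P else 0 := by
  simp only [show e * (Q * k) = Q * (e * k) by ring, Nat.mul_dvd_mul_iff_left hQ,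
    mul_dvd_mul_iff_dvd_and_dvd_of_coprime hQP hQk]
  by_cases hQe : Q ∣ e <;> by_cases hP : P ∣ e * k <;> simp [hQe, hP]

lemma prod_dvd_mul_prod_erase_iff {ι : Type*} [Fintype ι] [DecidableEq ι] {P : ι → ℕ}
    (hP : ∀ i, 0 < P i) (i : ι) {x : ℕ} : ∏ j, P j ∣ x * ∏ j ∈ univ.erase i, P j ↔ P i ∣ x := by
  rw [← mul_prod_erase univ P (mem_univ i)]
  exact Nat.mul_dvd_mul_iff_right (prod_pos fun j _ => hP j)

end Nat

lemma ZMod.natCast_eq_neg_of_add_mod_eq_zero {P a c : ℕ} (h : (a + c) % P = 0) :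
    (a : ZMod P) = -(c : ℕ) := by
  have h0 := (ZMod.natCast_eq_zero_iff (a + c) P).2 (Nat.dvd_of_mod_eq_zero h)
  push_cast at h0
  linear_combination h0

namespace HittingSet

lemma p_prime (i : ℕ) : (p i).Prime := Nat.prime_nth_prime _

lemma q_prime (n j : ℕ) : (q n j).Prime := Nat.prime_nth_prime _

lemma three_lt_p (i : ℕ) : 3 < p i := by
  have := Nat.add_two_le_nth_prime (i + 2)
  unfold p
  omega

lemma p_injective : Function.Injective p := fun _ _ h => by
  simpa using Nat.nth_injective Nat.infinite_setOfPred_prime h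

lemma coprime_q_p {n i : ℕ} (hi : i < 2 * n) (j : ℕ) : Nat.Coprime (q n j) (p i) :=
  (Nat.coprime_primes (q_prime n j) (p_prime i)).2 fun h => by
    have := Nat.nth_injective Nat.infinite_setOfPred_prime h
    omega

lemma coprime_q_q {n j j' : ℕ} (h : j ≠ j') : Nat.Coprime (q n j) (q n j') :=
  (Nat.coprime_primes (q_prime n j) (q_prime n j')).2 fun h' => h <| by
    have := Nat.nth_injective Nat.infinite_setOfPred_prime h'
    omega

section Gadget

/-- `s_{j,d} ≡ -coeff b d (mod p_{i_b})`: the defining congruences of `s_{j,d}`, as a table. -/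
def coeff : Fin 3 → Fin 6 → ℕ := ![![1, 0, 0, 1, 3, 2], ![0, 1, 0, 2, 1, 3], ![0, 0, 1, 3, 2, 1]]

lemma coeff_castAdd (a b : Fin 3) : coeff b (Fin.castAdd 3 a) = if a = b then 1 else 0 := by
  revert a b; decide

lemma coeff_natAdd (c b : Fin 3) : coeff b (Fin.natAdd 3 c) = 1 + (3 + b - c) % 3 := by
  revert c b; decide

lemma exists_coeff_eq_zero_iff_ne {d : Fin 6} (h : ∀ b, coeff b d ≤ 1) :
    ∃ a, ∀ b, coeff b d = 0 ↔ b ≠ a := by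
  revert d; decide

/-- Every row of `coeff` takes the values `0, 0, 1, 1, 2, 3`. -/
lemma ne_zero_and_eq_zero_or_eq_of_card_eq_two {R : Type*} [CommRing R] [DecidableEq R]
    (b : Fin 3) {X Y : R} (h : #{d | Y = coeff b d * X} = 2) : X ≠ 0 ∧ (Y = 0 ∨ Y = X) := by
  have hrow : #{d | Y = coeff b d * X} = (if Y = 0 then 2 else 0) + (if Y = X then 2 else 0) +
      (if Y = 2 * X then 1 else 0) + (if Y = 3 * X then 1 else 0) := by
    rw [card_filter, Fin.sum_univ_six]
    fin_cases b <;> simp [coeff] <;> split_ifs <;> omega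
  rw [hrow] at h
  refine ⟨fun hX => ?_, ?_⟩
  · simp only [hX, mul_zero] at h
    split_ifs at h <;> omega
  · by_contra hY
    push Not at hY
    rw [if_neg hY.1, if_neg hY.2] at h
    split_ifs at h with h2 h3 <;> try omega
    exact hY.1 (by linear_combination 3 * h2 - 2 * h3)

lemma le_one_of_eq_natCast_mul {P : ℕ} [Fact P.Prime] (hP : 3 < P) {X Y : ZMod P} (hX : X ≠ 0)
    (hY : Y = 0 ∨ Y = X) {c : ℕ} (hc : c ≤ 3) (h : Y = c * X) : c ≤ 1 := by
  have hne : ∀ c : ℕ, 0 < c → c < P → (c : ZMod P) ≠ 0 := fun c hc0 hcP hc =>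
    absurd (Nat.le_of_dvd hc0 ((ZMod.natCast_eq_zero_iff c P).1 hc)) (by omega)
  have h2 : (2 : ZMod P) ≠ 0 := by exact_mod_cast hne 2 two_pos (by omega)
  have h3 : (3 : ZMod P) ≠ 0 := by exact_mod_cast hne 3 three_pos hP
  by_contra hc1
  obtain rfl | rfl : c = 2 ∨ c = 3 := by omega
  all_goals rcases hY with hY | hY <;> rw [hY] at h <;> push_cast at h
  · exact mul_ne_zero h2 hX h.symm
  · exact hX (by linear_combination -h)
  · exact mul_ne_zero h3 hX h.symm
  · exact mul_ne_zero h2 hX (by linear_combination -h)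

variable {P : Fin 3 → ℕ}

def rhoExp (P : Fin 3 → ℕ) : Fin 6 → ℕ := ![∏ b, P b, P 0, P 1, P 2, 1, 1]

lemma coprime_rhoExp {Q : ℕ} (hQP : ∀ b, Nat.Coprime Q (P b)) (d : Fin 6) :
    Nat.Coprime Q (rhoExp P d) := by
  fin_cases d
  exacts [Nat.Coprime.prod_right (t := univ) fun b _ => hQP b, hQP 0, hQP 1, hQP 2,
    Nat.coprime_one_right Q, Nat.coprime_one_right Q]

lemma card_prime_dvd_rhoExp (hP : ∀ b, (P b).Prime) (hPinj : Function.Injective P) (b : Fin 3) :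
    #{d | P b ∣ rhoExp P d} = 2 := by
  have hdvd : ∀ c, P b ∣ P c ↔ b = c := fun c =>
    (Nat.prime_dvd_prime_iff_eq (hP b) (hP c)).trans hPinj.eq_iff
  have hprod : P b ∣ ∏ c, P c := dvd_prod_of_mem P (mem_univ b)
  rw [card_filter, Fin.sum_univ_six]
  simp only [rhoExp, Matrix.cons_val_zero, Matrix.cons_val_one, Matrix.cons_val, hprod, hdvd,
    (hP b).not_dvd_one, if_true, if_false, add_zero]
  fin_cases b <;> simp

lemma card_prod_dvd_rhoExp (hP : ∀ b, (P b).Prime) (hPinj : Function.Injective P) :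
    #{d | ∏ b, P b ∣ rhoExp P d} = 1 := by
  have hc : ∀ c, ¬ ∏ b, P b ∣ P c := fun c h =>
    have hc' : c + 1 ≠ c := by fin_cases c <;> decide
    hc' (hPinj ((Nat.prime_dvd_prime_iff_eq (hP _) (hP c)).1
      ((dvd_prod_of_mem P (mem_univ (c + 1))).trans h)))
  have h1 : ¬ ∏ b, P b ∣ 1 := fun h =>
    (hP 0).not_dvd_one ((dvd_prod_of_mem P (mem_univ 0)).trans h)
  rw [card_filter, Fin.sum_univ_six]
  simp [rhoExp, hc, h1]

lemma card_prod_dvd_eq_of_card_eq {Q : ℕ} (hQ : Q ≠ 1) (hQP : ∀ b, Nat.Coprime Q (P b))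
    {e : Fin 6 → ℕ}
    (hcount : ∀ k, Nat.Coprime Q k → #{d | ∏ b, P b ∣ e d * k ∧ ¬ Q ∣ e d} =
      #{d | ∏ b, P b ∣ rhoExp P d * k ∧ ¬ Q ∣ rhoExp P d})
    {k : ℕ} (hk : Nat.Coprime Q k) :
    #{d | ∏ b, P b ∣ e d * k} = #{d | ∏ b, P b ∣ rhoExp P d * k} := by
  have hu : ∀ d, ¬ Q ∣ rhoExp P d := fun d h => hQ ((coprime_rhoExp hQP d).eq_one_of_dvd h)
  have he : ∀ d, ¬ Q ∣ e d := by
    have h := hcount _ (Nat.Coprime.prod_right (t := univ) fun b _ => hQP b)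
    simp only [dvd_mul_left, true_and, hu, not_false_eq_true, filter_true] at h
    exact fun d => card_filter_eq_iff.1 h d (mem_univ d)
  simpa only [he, hu, not_false_eq_true, and_true] using hcount k hk

lemma coeff_le_three (b : Fin 3) (d : Fin 6) : coeff b d ≤ 3 := by
  revert b d; decide

theorem existsUnique_not_dvd_of_card_eq (hP : ∀ b, (P b).Prime) (hP3 : ∀ b, 3 < P b)
    (hPinj : Function.Injective P) {Q : ℕ} (hQP : ∀ b, Nat.Coprime Q (P b)) {e : Fin 6 → ℕ}
    {x1 x2 : ℕ} (he : ∀ b d, P b ∣ e d ↔ (x2 : ZMod (P b)) = coeff b d * x1)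
    (hcount : ∀ k, Nat.Coprime Q k →
      #{d | ∏ b, P b ∣ e d * k} = #{d | ∏ b, P b ∣ rhoExp P d * k}) :
    ∃! a, ¬ P a ∣ x2 ∧ ∀ b, b ≠ a → P b ∣ x2 := by
  have htwo : ∀ b, #{d | P b ∣ e d} = 2 := fun b => by
    have h := hcount _ (Nat.Coprime.prod_right (t := univ.erase b) fun c _ => hQP c)
    simp only [Nat.prod_dvd_mul_prod_erase_iff (fun c => (hP c).pos)] at h
    rw [h, card_prime_dvd_rhoExp hP hPinj b]
  have hx : ∀ b, (x1 : ZMod (P b)) ≠ 0 ∧ ((x2 : ZMod (P b)) = 0 ∨ (x2 : ZMod (P b)) = x1) :=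
    fun b => by
      simp only [he] at htwo
      exact ne_zero_and_eq_zero_or_eq_of_card_eq_two b (htwo b)
  obtain ⟨d, hd⟩ : ∃ d, ∏ b, P b ∣ e d := by
    have h := hcount 1 (Nat.coprime_one_right Q)
    simp only [mul_one, card_prod_dvd_rhoExp hP hPinj] at h
    obtain ⟨d, hd⟩ := card_pos.1 (h ▸ one_pos)
    exact ⟨d, (mem_filter.1 hd).2⟩
  have hed : ∀ b, (x2 : ZMod (P b)) = coeff b d * x1 := fun b =>
    (he b d).1 ((dvd_prod_of_mem P (mem_univ b)).trans hd)
  have hcol : ∀ b, coeff b d ≤ 1 := fun b =>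
    have := Fact.mk (hP b)
    le_one_of_eq_natCast_mul (hP3 b) (hx b).1 (hx b).2 (coeff_le_three b d) (hed b)
  obtain ⟨a, ha⟩ := exists_coeff_eq_zero_iff_ne hcol
  have hdvd : ∀ b, P b ∣ x2 ↔ b ≠ a := fun b => by
    rw [← ha b, ← ZMod.natCast_eq_zero_iff, hed b]
    rcases Nat.le_one_iff_eq_zero_or_eq_one.1 (hcol b) with h | h <;> simp [h, (hx b).1]
  exact ⟨a, ⟨fun h => (hdvd a).1 h rfl, fun b hb => (hdvd b).2 hb⟩,
    fun a' ha' => by_contra fun hne => ha'.1 ((hdvd a').2 hne)⟩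

end Gadget

section Rotations

variable (n : ℕ) {m : ℕ} (idx : Fin m → Fin 3 → Fin n)

noncomputable def rotations (f : Fin n → ℕ) (g : Fin m → Fin 6 → ℕ) : Perm (Omega n idx) :=
  Equiv.sumCongr (Equiv.sigmaCongrRight fun i => finRotate _ ^ f i)
    (Equiv.sigmaCongrRight fun j => Equiv.sigmaCongrRight fun d => finRotate (r n idx j) ^ g j d)

lemma rotations_mul (f f' : Fin n → ℕ) (g g' : Fin m → Fin 6 → ℕ) :
    rotations n idx f g * rotations n idx f' g' = rotations n idx (f + f') (g + g') := by
  ext (⟨i, v⟩ | ⟨j, d, v⟩) <;> simp [rotations, pow_add]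

lemma rotations_pow (f : Fin n → ℕ) (g : Fin m → Fin 6 → ℕ) (k : ℕ) :
    rotations n idx f g ^ k = rotations n idx (fun i => f i * k) (fun j d => g j d * k) := by
  induction k with
  | zero => ext (⟨i, v⟩ | ⟨j, d, v⟩) <;> simp [rotations]
  | succ k ih =>
    rw [pow_succ, ih, rotations_mul]
    rfl

lemma pi1_eq_rotations (s : Fin m → ℕ → ℕ) :
    pi1 n idx s = rotations n idx 1 fun j d => s j d := by
  ext (⟨i, v⟩ | ⟨j, d, v⟩) <;> simp [pi1, rotations]

lemma pi2_eq_rotations (t : Fin m → ℕ) : pi2 n idx t = rotations n idx 0 fun j _ => t j := by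
  ext (⟨i, v⟩ | ⟨j, d, v⟩) <;> simp [pi2, rotations]

lemma rho_eq_rotations :
    rho n idx = rotations n idx 1 fun j => rhoExp fun b => p (idx j b) := by
  ext (⟨i, v⟩ | ⟨j, d, v⟩) <;> simp [rho, rotations, rhoExp, Fin.prod_univ_three]

lemma card_fixed_rotations (f : Fin n → ℕ) (g : Fin m → Fin 6 → ℕ) :
    #{x | rotations n idx f g x = x} =
      (∑ i : Fin n, if p i * p (n + i) ∣ f i then p i * p (n + i) else 0) +
        ∑ j, ∑ d, if r n idx j ∣ g j d then r n idx j else 0 := by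
  rw [rotations, Perm.card_fixed_sumCongr, Perm.card_fixed_sigmaCongrRight,
    Perm.card_fixed_sigmaCongrRight]
  simp only [Perm.card_fixed_sigmaCongrRight, card_fixed_finRotate_pow]

end Rotations

section Extraction

variable (n : ℕ) {m : ℕ} (idx : Fin m → Fin 3 → Fin n)

lemma r_eq (j : Fin m) : r n idx j = q n j * ∏ b, p (idx j b) := by
  rw [r, Fin.prod_univ_three]

lemma coprime_q_prod (j : ℕ) (j' : Fin m) : Nat.Coprime (q n j) (∏ b, p (idx j' b)) :=
  Nat.Coprime.prod_right fun _ _ => coprime_q_p (by omega) j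

/-- Only the six blocks of clause `j` have a length divisible by `q_j`. -/
lemma card_fixed_rotations_pow_q_mul (f : Fin n → ℕ) (g : Fin m → Fin 6 → ℕ) (j : Fin m)
    {k : ℕ} (hk : Nat.Coprime (q n j) k) :
    #{x | (rotations n idx f g ^ (q n j * k)) x = x} =
      #{x | (rotations n idx f g ^ k) x = x} +
        #{d | ∏ b, p (idx j b) ∣ g j d * k ∧ ¬ q n j ∣ g j d} * r n idx j := by
  have hblock : ∀ i : Fin n,
      p i * p (n + i) ∣ f i * (q n j * k) ↔ p i * p (n + i) ∣ f i * k := fun i => by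
    rw [show f i * (q n j * k) = f i * k * q n j by ring]
    exact (Nat.Coprime.mul_right (coprime_q_p (i := i) (by omega) j)
      (coprime_q_p (i := n + i) (by omega) j)).symm.dvd_mul_right
  have hclause : ∀ j' : Fin m, j' ≠ j → ∀ d,
      r n idx j' ∣ g j' d * (q n j * k) ↔ r n idx j' ∣ g j' d * k := fun j' hj' d => by
    rw [show g j' d * (q n j * k) = g j' d * k * q n j by ring, r_eq]
    exact (Nat.Coprime.mul_right (coprime_q_q fun h => hj' (Fin.ext h).symm)
      (coprime_q_prod n idx j j')).symm.dvd_mul_right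
  have hj : ∀ d, (if r n idx j ∣ g j d * (q n j * k) then r n idx j else 0) =
      (if r n idx j ∣ g j d * k then r n idx j else 0) +
        if ∏ b, p (idx j b) ∣ g j d * k ∧ ¬ q n j ∣ g j d
        then r n idx j else 0 := fun d => by
    simpa only [r_eq] using
      Nat.ite_mul_dvd_mul_mul (e := g j d) (q_prime n j).pos (coprime_q_prod n idx j j) hk
  have hsplit : ∀ G : Fin m → ℕ, ∑ j', G j' = G j + ∑ j' ∈ univ.erase j, G j' := fun G =>
    (add_sum_erase _ _ (mem_univ j)).symm
  simp only [rotations_pow, card_fixed_rotations, hblock]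
  rw [hsplit, hsplit (fun j' => ∑ d, if r n idx j' ∣ g j' d * k then r n idx j' else 0),
    sum_congr rfl fun j' hj' => sum_congr rfl fun d _ =>
      if_congr (hclause j' (ne_of_mem_erase hj') d) rfl rfl]
  have hcard : (∑ d, if ∏ b, p (idx j b) ∣ g j d * k ∧ ¬ q n j ∣ g j d
      then r n idx j else 0) =
      #{d | ∏ b, p (idx j b) ∣ g j d * k ∧ ¬ q n j ∣ g j d} * r n idx j := by
    rw [← sum_filter, sum_const, smul_eq_mul]
  simp only [hj, sum_add_distrib, hcard]
  ring

lemma r_pos (j : Fin m) : 0 < r n idx j := by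
  rw [r_eq]
  exact Nat.mul_pos (q_prime n j).pos (prod_pos fun b _ => (p_prime _).pos)

lemma card_eq_of_cycleType_eq {f f' : Fin n → ℕ} {g g' : Fin m → Fin 6 → ℕ}
    (h : (rotations n idx f g).cycleType = (rotations n idx f' g').cycleType) (j : Fin m)
    {k : ℕ} (hk : Nat.Coprime (q n j) k) :
    #{d | ∏ b, p (idx j b) ∣ g j d * k ∧ ¬ q n j ∣ g j d} =
      #{d | ∏ b, p (idx j b) ∣ g' j d * k ∧ ¬ q n j ∣ g' j d} := by
  have hQk := Perm.card_fixed_pow_eq_of_cycleType_eq h (q n j * k)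
  rw [card_fixed_rotations_pow_q_mul n idx f g j hk,
    card_fixed_rotations_pow_q_mul n idx f' g' j hk, Perm.card_fixed_pow_eq_of_cycleType_eq h k,
    Nat.add_left_cancel_iff] at hQk
  exact Nat.eq_of_mul_eq_mul_right (r_pos n idx j) hQk

end Extraction

section Residues

variable (n : ℕ) {m : ℕ} (idx : Fin m → Fin 3 → Fin n)

lemma prime_dvd_exponent_iff {s : Fin m → ℕ → ℕ} {t : Fin m → ℕ}
    (hs1 : ∀ j : Fin m, ∀ a b : Fin 3,
      (s j a.val + if a = b then 1 else 0) % p (idx j b) = 0)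
    (hs2 : ∀ j : Fin m, ∀ c b : Fin 3,
      (s j (3 + c.val) + (1 + (3 + b.val - c.val) % 3)) % p (idx j b) = 0)
    (htp : ∀ j : Fin m, ∀ a : Fin 3, t j % p (idx j a) = 1) (x1 x2 : ℕ) (j : Fin m) (b : Fin 3)
    (d : Fin 6) :
    p (idx j b) ∣ s j d * x1 + t j * x2 ↔ (x2 : ZMod (p (idx j b))) = coeff b d * x1 := by
  have hs : (s j d : ZMod (p (idx j b))) = -(coeff b d : ℕ) := by
    refine Fin.addCases (m := 3) (n := 3) (fun a => ?_) (fun c => ?_) d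
    · rw [coeff_castAdd, Fin.val_castAdd]
      exact ZMod.natCast_eq_neg_of_add_mod_eq_zero (hs1 j a b)
    · rw [coeff_natAdd, Fin.val_natAdd]
      exact ZMod.natCast_eq_neg_of_add_mod_eq_zero (hs2 j c b)
  have ht : (t j : ZMod (p (idx j b))) = 1 := by
    rw [← ZMod.natCast_mod, htp j b, Nat.cast_one]
  rw [← ZMod.natCast_eq_zero_iff]
  push_cast
  rw [hs, ht]
  constructor <;> intro h <;> linear_combination h

end Residues

theorem exists_unique_not_dvd_x2_general
    (n m : ℕ) (idx : Fin m → Fin 3 → Fin n) (hidx : ∀ j, StrictMono (idx j))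
    (s : Fin m → ℕ → ℕ) (t : Fin m → ℕ)
    -- for `a ∈ [3]`: `s_{j,a} ≡ -1 (mod p_{i_a})` and `s_{j,a} ≡ 0 (mod p_{i_b})` for `b ≠ a`
    (hs1 : ∀ j : Fin m, ∀ a b : Fin 3,
      (s j a.val + if a = b then 1 else 0) % p (idx j b) = 0)
    -- `(s_{j,4}, s_{j,5}, s_{j,6}) ≡ (-1,-3,-2) (mod p_{i_1})`, `(-2,-1,-3) (mod p_{i_2})`,
    -- `(-3,-2,-1) (mod p_{i_3})`
    (hs2 : ∀ j : Fin m, ∀ c b : Fin 3,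
      (s j (3 + c.val) + (1 + (3 + b.val - c.val) % 3)) % p (idx j b) = 0)
    -- `t_j ∈ [0, r_j - 1]`, `t_j ≡ 1 (mod p_{i_a})` for `a ∈ [3]`, `t_j ≡ 0 (mod q_j)`
    (htp : ∀ j : Fin m, ∀ a : Fin 3, t j % p (idx j a) = 1)
    (x1 x2 : ℕ)
    (hct : (pi1 n idx s ^ x1 * pi2 n idx t ^ x2).cycleType = (rho n idx).cycleType) :
    ∀ j : Fin m, ∃! a : Fin 3,
      ¬ p (idx j a) ∣ x2 ∧ ∀ b : Fin 3, b ≠ a → p (idx j b) ∣ x2 := by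
  intro j
  have hσ : pi1 n idx s ^ x1 * pi2 n idx t ^ x2 =
      rotations n idx (fun _ => x1) fun j' d => s j' d * x1 + t j' * x2 := by
    rw [pi1_eq_rotations, pi2_eq_rotations, rotations_pow, rotations_pow, rotations_mul]
    congr 1
    ext
    simp
  rw [hσ, rho_eq_rotations] at hct
  have hqp : ∀ b, Nat.Coprime (q n j) (p (idx j b)) := fun b => coprime_q_p (by omega) j
  exact existsUnique_not_dvd_of_card_eq (fun _ => p_prime _) (fun _ => three_lt_p _)
    (p_injective.comp (Fin.val_injective.comp (hidx j).injective)) hqp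
    (prime_dvd_exponent_iff n idx hs1 hs2 htp x1 x2 j)
    fun k hk => card_prod_dvd_eq_of_card_eq (q_prime n j).one_lt.ne' hqp
      (fun k hk => card_eq_of_cycleType_eq n idx hct j hk) hk

/-- If `ct(π_1^{x_1} π_2^{x_2}) = ct(ρ)` then for every clause `C_j = {i_1 < i_2 < i_3}` there
is a unique `a ∈ [3]` with `x_2 ≢ 0 (mod p_{i_a})` and `x_2 ≡ 0 (mod p_{i_b})` for all
`b ∈ [3] ∖ {a}`. -/
theorem exists_unique_not_dvd_x2
    (n m : ℕ) (idx : Fin m → Fin 3 → Fin n) (hidx : ∀ j, StrictMono (idx j))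
    (s : Fin m → ℕ → ℕ) (t : Fin m → ℕ)
    -- `s j d ∈ [0, r_j - 1]` for `d ∈ [6]` (here zero-indexed, `d ∈ {0,…,5}`)
    (hslt : ∀ j : Fin m, ∀ d : ℕ, d < 6 → s j d < r n idx j)
    -- `s_{j,d} ≡ 1 (mod q_j)` for all `d ∈ [6]`
    (hsq : ∀ j : Fin m, ∀ d : ℕ, d < 6 → s j d % q n j = 1)
    -- for `a ∈ [3]`: `s_{j,a} ≡ -1 (mod p_{i_a})` and `s_{j,a} ≡ 0 (mod p_{i_b})` for `b ≠ a`
    (hs1 : ∀ j : Fin m, ∀ a b : Fin 3,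
      (s j a.val + if a = b then 1 else 0) % p (idx j b) = 0)
    -- `(s_{j,4}, s_{j,5}, s_{j,6}) ≡ (-1,-3,-2) (mod p_{i_1})`, `(-2,-1,-3) (mod p_{i_2})`,
    -- `(-3,-2,-1) (mod p_{i_3})`
    (hs2 : ∀ j : Fin m, ∀ c b : Fin 3,
      (s j (3 + c.val) + (1 + (3 + b.val - c.val) % 3)) % p (idx j b) = 0)
    -- `t_j ∈ [0, r_j - 1]`, `t_j ≡ 1 (mod p_{i_a})` for `a ∈ [3]`, `t_j ≡ 0 (mod q_j)`
    (htlt : ∀ j : Fin m, t j < r n idx j)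
    (htp : ∀ j : Fin m, ∀ a : Fin 3, t j % p (idx j a) = 1)
    (htq : ∀ j : Fin m, t j % q n j = 0)
    (x1 x2 : ℕ)
    (hct : (pi1 n idx s ^ x1 * pi2 n idx t ^ x2).cycleType = (rho n idx).cycleType) :
    ∀ j : Fin m, ∃! a : Fin 3,
      ¬ p (idx j a) ∣ x2 ∧ ∀ b : Fin 3, b ≠ a → p (idx j b) ∣ x2 :=
  exists_unique_not_dvd_x2_general n m idx hidx s t hs1 hs2 htp x1 x2 hct

end HittingSet
end
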